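/- arXiv:2406.02585 — 4 statements merged into one kernel-verified Lean document; each statement's English description precedes it below -/
import Mathlib

section
/- Let T and d be positive integers and suppose there exist vectors k_1, …, k_T and q_1, …, q_T in the Euclidean space ℝ^d such that for every index i, ⟨q_i, k_i⟩ = 1 and ⟨q_i, k_j⟩ = 0 whenever j < i. Then d ≥ T. (Hence an attention layer whose pre-softmax scores exactly realize the causal attention pattern on a length-T sequence requires an embedding dimension of at least T.) -/
/-! The matrix `⟪q i, k j⟫` is upper unitriangular, so the `k i` are `T` linearly
independent vectors in `ℝ^d`. -/

theorem linearIndependent_of_dual_triangular {K M ι : Type*} [Field K] [AddCommGroup M]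
    [Module K M] [LinearOrder ι] {v : ι → M} (f : ι → Module.Dual K M)
    (hdiag : ∀ i, f i (v i) ≠ 0) (hlow : ∀ i j, j < i → f i (v j) = 0) :
    LinearIndependent K v := by
  classical
  rw [linearIndependent_iff']
  intro s g hsum i₀ hi₀
  by_contra hgi₀
  -- Apply `f i` to the relation, for the largest index `i` with a nonzero coefficient.
  set S := s.filter (g · ≠ 0)
  have hS : S.Nonempty := ⟨i₀, Finset.mem_filter.2 ⟨hi₀, hgi₀⟩⟩
  obtain ⟨hi, hgi⟩ := Finset.mem_filter.1 (S.max'_mem hS)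
  set i := S.max' hS
  have hvanish : ∀ j ∈ s, j ≠ i → g j * f i (v j) = 0 := by
    intro j hj hji
    rcases lt_or_gt_of_ne hji with hlt | hgt
    · rw [hlow i j hlt, mul_zero]
    · by_cases hgj : g j = 0
      · rw [hgj, zero_mul]
      · exact absurd (S.le_max' j (Finset.mem_filter.2 ⟨hj, hgj⟩)) (not_le.2 hgt)
  have hcoeff : g i * f i (v i) = 0 := by
    simpa [map_sum, Finset.sum_eq_single_of_mem i hi hvanish] using congrArg (f i) hsum
  exact mul_ne_zero hgi (hdiag i) hcoeff

theorem causal_pattern_needs_dim_ge_length_general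
    (T d : ℕ)
    (k q : Fin T → EuclideanSpace ℝ (Fin d))
    (hdiag : ∀ i : Fin T, (inner ℝ (q i) (k i) : ℝ) = 1)
    (hlow : ∀ i j : Fin T, j < i → (inner ℝ (q i) (k j) : ℝ) = 0) :
    T ≤ d := by
  have hk : LinearIndependent ℝ k :=
    linearIndependent_of_dual_triangular (fun i => innerₛₗ ℝ (q i))
      (fun i => by simp [hdiag i]) (fun i j hji => by simp [hlow i j hji])
  simpa using hk.fintype_card_le_finrank

/-- If vectors `k i`, `q i` in `ℝ^d` realize the causal attention pattern exactly
(`⟪q i, k i⟫ = 1` and `⟪q i, k j⟫ = 0` for `j < i`), then `d ≥ T`. -/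
theorem causal_pattern_needs_dim_ge_length
    (T d : ℕ) (hT : 0 < T) (hd : 0 < d)
    (k q : Fin T → EuclideanSpace ℝ (Fin d))
    (hdiag : ∀ i : Fin T, (inner ℝ (q i) (k i) : ℝ) = 1)
    (hlow : ∀ i j : Fin T, j < i → (inner ℝ (q i) (k j) : ℝ) = 0) :
    T ≤ d :=
  causal_pattern_needs_dim_ge_length_general T d k q hdiag hlow
end

section
/- Let Token be the four-element alphabet {0, 1, [, ]}, let e : Token → ℝ^d be any token embedding, let F : (Fin 6 → ℝ^d) → (Fin 6 → ℝ^d) be any permutation-equivariant map, and let G : (Fin 6 → ℝ^d) → ℕ be any permutation-invariant map. Then the function l ↦ G(F(e ∘ l)) on length-6 token sequences does not compute the number of 1-tokens strictly between the first '[' and the first ']': it assigns equal values to the sequences ('[', '1', ']', '[', '0', ']') and ('[', '0', ']', '[', '1', ']'), whose targets are 1 and 0 respectively. -/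
/-- The four-element token alphabet `{0, 1, [, ]}`. -/
inductive Token : Type
  | zero
  | one
  | lbrack
  | rbrack
  deriving DecidableEq, Repr

open Token

/-- The number of `1`-tokens occurring strictly between the first `'['` and the
first `']'` following it. -/
def target (l : List Token) : ℕ :=
  (((l.dropWhile (· ≠ lbrack)).drop 1).takeWhile (· ≠ rbrack)).count one

theorem Function.comp_perm_invariant_of_equivariant {ι α β γ : Type*}
    {F : (ι → α) → ι → β} {G : (ι → β) → γ}
    (hF : ∀ (σ : Equiv.Perm ι) (X : ι → α), F (X ∘ σ) = F X ∘ σ)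
    (hG : ∀ (σ : Equiv.Perm ι) (X : ι → β), G (X ∘ σ) = G X)
    (σ : Equiv.Perm ι) (X : ι → α) : G (F (X ∘ σ)) = G (F X) := by
  rw [hF, hG]

lemma swap_one_four_exchanges_counted_token :
    ![lbrack, one, rbrack, lbrack, zero, rbrack] ∘ Equiv.swap (1 : Fin 6) 4 =
      ![lbrack, zero, rbrack, lbrack, one, rbrack] := by
  decide

/-- A non-causal Transformer with no position code (a permutation-equivariant body `F`
followed by a permutation-invariant readout `G`) cannot compute the contextual count:
it gives equal values on two length-6 sequences whose targets are `1` and `0`. -/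
theorem nonCausal_NoPE_cannot_count
    (d : ℕ) (e : Token → EuclideanSpace ℝ (Fin d))
    (F : (Fin 6 → EuclideanSpace ℝ (Fin d)) → Fin 6 → EuclideanSpace ℝ (Fin d))
    (G : (Fin 6 → EuclideanSpace ℝ (Fin d)) → ℕ)
    (hF : ∀ (σ : Equiv.Perm (Fin 6)) (X : Fin 6 → EuclideanSpace ℝ (Fin d)),
      F (X ∘ σ) = F X ∘ σ)
    (hG : ∀ (σ : Equiv.Perm (Fin 6)) (X : Fin 6 → EuclideanSpace ℝ (Fin d)),
      G (X ∘ σ) = G X) :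
    G (F (e ∘ ![lbrack, one, rbrack, lbrack, zero, rbrack])) =
        G (F (e ∘ ![lbrack, zero, rbrack, lbrack, one, rbrack])) ∧
    target [lbrack, one, rbrack, lbrack, zero, rbrack] = 1 ∧
    target [lbrack, zero, rbrack, lbrack, one, rbrack] = 0 := by
  refine ⟨?_, by decide, by decide⟩
  rw [← swap_one_four_exchanges_counted_token, ← Function.comp_assoc,
    Function.comp_perm_invariant_of_equivariant hF hG]
end

section
/- Let V be a real vector space, let v₁, v₀ ∈ V be linearly independent, and let w, b be positive reals. Then the map n ↦ (1 / (n·w + b)) • ((n·w) • v₁ + b • v₀) from ℕ to V is injective. -/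
/-!
The readout equals `(n w / (n w + b)) • v₁ + (b / (n w + b)) • v₀`. By linear independence its
`v₀`-coordinate `b / (n w + b)` is determined, and since `b ≠ 0` and `w ≠ 0` this coordinate
determines `n`.
-/

lemma natCast_mul_add_inv_injective {K : Type*} [Field K] [CharZero K] {w : K} (hw : w ≠ 0)
    (b : K) : Function.Injective fun n : ℕ => ((n : K) * w + b)⁻¹ := by
  intro n m h
  have hden : (n : K) * w + b = m * w + b := inv_injective h
  exact_mod_cast mul_right_cancel₀ hw (add_right_cancel hden)

/-- If `v₁, v₀` are linearly independent and `w, b > 0`, the softmax-weighted readout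
`n ↦ ((n·w) • v₁ + b • v₀) / (n·w + b)` is injective on `ℕ`. -/
theorem weighted_count_readout_injective
    {V : Type*} [AddCommGroup V] [Module ℝ V] (v₁ v₀ : V)
    (hli : LinearIndependent ℝ ![v₁, v₀])
    (w b : ℝ) (hw : 0 < w) (hb : 0 < b) :
    Function.Injective
      (fun n : ℕ => (1 / ((n : ℝ) * w + b)) • (((n : ℝ) * w) • v₁ + b • v₀)) := by
  intro n m h
  simp only [smul_add, smul_smul] at h
  have hbias : 1 / ((n : ℝ) * w + b) * b = 1 / ((m : ℝ) * w + b) * b := (hli.eq_of_pair h).2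
  refine natCast_mul_add_inv_injective hw.ne' b (mul_right_cancel₀ hb.ne' ?_)
  simpa only [one_div] using hbias
end

section
/- Let l be a list over the alphabet {0, 1, [, ]} whose sublist of delimiter tokens equals k consecutive copies of the pattern ['[', ']']. Then for every n ≤ l.length, the length-n prefix of l contains exactly one more '[' token than ']' token if and only if there exists an index p < n with l[p] = '[' and no index q with p < q < n and l[q] = ']'. (That is, a position lies inside a delimited region exactly when its prefix bracket counts differ by one.) -/
open Token

/-- `isDelim` holds exactly on `'['` and `']'`. -/
def isDelim : Token → Bool
  | lbrack => true
  | rbrack => true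
  | _ => false

/-!
Neither count changes when the non-delimiters are deleted, and in a prefix of `[ ] [ ] … [ ]`
the `'['`s outnumber the `']'`s by one exactly when the prefix ends in `'['`. So both sides say
that the last delimiter before position `n` is a `'['`.
-/

section

variable {α : Type*} {a b : α}

theorem count_eq_count_add_one_iff_getLast?_of_prefix [DecidableEq α] (hab : a ≠ b) (k : ℕ)
    {f : List α} (hf : f <+: (List.replicate k [a, b]).flatten) :
    f.count a = f.count b + 1 ↔ f.getLast? = some a := by
  induction k generalizing f with
  | zero => simp_all
  | succ k ih =>
    rw [List.replicate_succ, List.flatten_cons, List.cons_append, List.cons_append,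
      List.prefix_cons_iff] at hf
    rcases hf with rfl | ⟨g, rfl, hg⟩
    · simp
    rcases List.prefix_cons_iff.mp hg with rfl | ⟨h, rfl, hh⟩
    · simp [hab]
    rcases h with _ | ⟨x, h⟩
    · simp [hab, hab.symm]
    rw [List.getLast?_cons_cons, List.getLast?_cons_cons, ← ih hh]
    simp [List.count_cons, hab, hab.symm]

def InsideRegion (a b : α) (l : List α) (n : ℕ) : Prop :=
  ∃ p < n, l[p]? = some a ∧ ∀ q, p < q → q < n → l[q]? ≠ some b

theorem not_insideRegion_zero (l : List α) : ¬InsideRegion a b l 0 := by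
  rintro ⟨p, hp, -⟩
  omega

theorem insideRegion_succ (l : List α) (n : ℕ) :
    InsideRegion a b l (n + 1) ↔ l[n]? = some a ∨ (InsideRegion a b l n ∧ l[n]? ≠ some b) := by
  constructor
  · rintro ⟨p, hp, hpa, hq⟩
    rcases Nat.lt_succ_iff_lt_or_eq.mp hp with hp | rfl
    · exact .inr ⟨⟨p, hp, hpa, fun q h₁ h₂ => hq q h₁ (by omega)⟩, hq n hp n.lt_succ_self⟩
    · exact .inl hpa
  · rintro (hna | ⟨⟨p, hp, hpa, hq⟩, hnb⟩)
    · exact ⟨n, n.lt_succ_self, hna, fun q h₁ h₂ => by omega⟩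
    · refine ⟨p, by omega, hpa, fun q h₁ h₂ => ?_⟩
      rcases Nat.lt_succ_iff_lt_or_eq.mp h₂ with h₂ | rfl
      exacts [hq q h₁ h₂, hnb]

theorem getLast?_filter_take_eq_some_iff_insideRegion {P : α → Bool}
    (hP : ∀ x, P x = true ↔ x = a ∨ x = b) (hab : a ≠ b) (l : List α) (n : ℕ) :
    ((l.take n).filter P).getLast? = some a ↔ InsideRegion a b l n := by
  induction n with
  | zero => simpa using not_insideRegion_zero l
  | succ n ih =>
    rw [List.take_add_one, List.filter_append, List.getLast?_append, insideRegion_succ, ← ih]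
    rcases l[n]? with _ | x
    · simp
    by_cases hxa : x = a
    · subst hxa; simp [(hP x).2 (.inl rfl)]
    by_cases hxb : x = b
    · subst hxb; simp [(hP x).2 (.inr rfl), Ne.symm hab]
    · have hPx : P x = false := Bool.eq_false_iff.2 fun h => ((hP x).1 h).elim hxa hxb
      simp [hPx, hxa, hxb]

end

theorem isDelim_eq_true_iff {x : Token} : isDelim x = true ↔ x = lbrack ∨ x = rbrack := by
  cases x <;> simp [isDelim]

/-- If the delimiter tokens of `l` read in order are `k` copies of the pair `[, ]`,
then a length-`n` prefix has exactly one more `'['` than `']'` iff there is a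
position `p < n` holding `'['` with no `']'` strictly between `p` and `n`. -/
theorem prefix_bracket_excess_iff_inside_region
    (k : ℕ) (l : List Token)
    (hdelim : l.filter isDelim = (List.replicate k [lbrack, rbrack]).flatten) :
    ∀ n : ℕ, n ≤ l.length →
      ((l.take n).count lbrack = (l.take n).count rbrack + 1 ↔
        ∃ p : ℕ, p < n ∧ l[p]? = some lbrack ∧
          ∀ q : ℕ, p < q → q < n → l[q]? ≠ some rbrack) := by
  intro n _
  have hne : lbrack ≠ rbrack := nofun
  have hprefix : (l.take n).filter isDelim <+: (List.replicate k [lbrack, rbrack]).flatten :=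
    hdelim ▸ (l.take_prefix n).filter isDelim
  rw [← List.count_filter (isDelim_eq_true_iff.2 (.inl rfl)),
    ← List.count_filter (isDelim_eq_true_iff.2 (.inr rfl)),
    count_eq_count_add_one_iff_getLast?_of_prefix hne k hprefix]
  exact getLast?_filter_take_eq_some_iff_insideRegion (fun _ => isDelim_eq_true_iff) hne l n
end
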